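/- Let p > 2. If w : ℝ → ℝ is a twice continuously differentiable function, not identically zero, satisfying w''(x) − w(x) + |w(x)|^(p−1)·w(x) = 0 for all x ∈ ℝ and w(x) → 0 as x → +∞ and as x → −∞, then there exists a ∈ ℝ such that either w(x) = Q(x−a) for all x, or w(x) = −Q(x−a) for all x. -/

import Mathlib

/-!
The equation has the first integral `E(u, u') = u'²/2 - u²/2 + |u|^(p+1)/(p+1)`. By the mean
value theorem `w'` tends to `0` along a sequence going to `+∞`, on which `w` also tends to `0`,
so `E ≡ 0` along `w`. At a point `x₀` where `|w|` is maximal we have `w'(x₀) = 0`, and `E = 0`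
then forces `|w(x₀)|^(p-1) = (p+1)/2 = Q(0)^(p-1)`. Since `±Q(· - x₀)` solves the same equation
with the same Cauchy data at `x₀`, and the phase-plane field is locally Lipschitz for `p > 2`,
uniqueness for the Cauchy problem gives `w = ±Q(· - x₀)`.
-/

open Real Set Filter Topology

/-- The ground state of the one-dimensional nonlinear Klein-Gordon equation. -/
noncomputable def Q (p : ℝ) (x : ℝ) : ℝ :=
  ((p + 1) / (2 * Real.cosh ((p - 1) / 2 * x) ^ 2)) ^ (1 / (p - 1))

section ODE

variable {E : Type*} [NormedAddCommGroup E] [NormedSpace ℝ E]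

theorem ODE_solution_unique_univ_of_locallyLipschitz {F : E → E} (hF : LocallyLipschitz F)
    {f g : ℝ → E} (hf : ∀ t, HasDerivAt f (F (f t)) t) (hg : ∀ t, HasDerivAt g (F (g t)) t)
    {t₀ : ℝ} (heq : f t₀ = g t₀) : f = g := by
  funext t
  obtain ⟨a, b, ht, ht₀⟩ : ∃ a b, t ∈ Ioo a b ∧ t₀ ∈ Ioo a b :=
    ⟨min t t₀ - 1, max t t₀ + 1, by grind⟩
  have hfc : Continuous f := continuous_iff_continuousAt.2 fun t => (hf t).continuousAt
  have hgc : Continuous g := continuous_iff_continuousAt.2 fun t => (hg t).continuousAt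
  obtain ⟨K, hK⟩ := hF.locallyLipschitzOn.exists_lipschitzOnWith_of_compact
    ((isCompact_Icc.image hfc).union (isCompact_Icc.image hgc))
  exact ODE_solution_unique_of_mem_Icc (v := fun _ => F) (fun _ _ => hK) ht₀ hfc.continuousOn
    (fun t _ => hf t) (fun t ht => .inl ⟨t, Ioo_subset_Icc_self ht, rfl⟩) hgc.continuousOn
    (fun t _ => hg t) (fun t ht => .inr ⟨t, Ioo_subset_Icc_self ht, rfl⟩) heq
    (Ioo_subset_Icc_self ht)

end ODE

theorem exists_seq_tendsto_atTop_deriv_tendsto_zero {f f' : ℝ → ℝ}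
    (hf : ∀ t, HasDerivAt f (f' t) t) {l : ℝ} (hl : Tendsto f atTop (𝓝 l)) :
    ∃ ξ : ℕ → ℝ, Tendsto ξ atTop atTop ∧ Tendsto (fun n => f' (ξ n)) atTop (𝓝 0) := by
  have hfc : Continuous f := continuous_iff_continuousAt.2 fun t => (hf t).continuousAt
  have hmvt (n : ℕ) : ∃ c ∈ Ioo (n : ℝ) (n + 1), f' c = (f (n + 1) - f n) / (n + 1 - n) :=
    exists_hasDerivAt_eq_slope f f' (by linarith) hfc.continuousOn fun t _ => hf t
  choose ξ hξ hξf' using hmvt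
  refine ⟨ξ, tendsto_atTop_mono (fun n => (hξ n).1.le) tendsto_natCast_atTop_atTop, ?_⟩
  have hshift : Tendsto (fun n : ℕ => (n : ℝ) + 1) atTop atTop :=
    tendsto_atTop_add_const_right _ 1 tendsto_natCast_atTop_atTop
  simpa [hξf'] using (hl.comp hshift).sub (hl.comp tendsto_natCast_atTop_atTop)

theorem Continuous.exists_ne_zero_forall_abs_le {u : ℝ → ℝ} (hu : Continuous u)
    (hne : ∃ x, u x ≠ 0) (htop : Tendsto u atTop (𝓝 0)) (hbot : Tendsto u atBot (𝓝 0)) :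
    ∃ x₀, u x₀ ≠ 0 ∧ ∀ x, |u x| ≤ |u x₀| := by
  obtain ⟨x₁, hx₁⟩ := hne
  have habs : Tendsto (fun x => |u x|) (cocompact ℝ) (𝓝 0) := by
    rw [cocompact_eq_atBot_atTop, tendsto_sup]
    exact ⟨by simpa using hbot.abs, by simpa using htop.abs⟩
  obtain ⟨x₀, hx₀⟩ := hu.abs.exists_forall_ge' x₁
    ((habs.eventually_lt_const (abs_pos.2 hx₁)).mono fun _ => le_of_lt)
  refine ⟨x₀, fun h => hx₁ ?_, hx₀⟩
  simpa [h] using hx₀ x₁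

noncomputable def phasePlaneField (p : ℝ) (y : ℝ × ℝ) : ℝ × ℝ :=
  (y.2, y.1 - |y.1| ^ (p - 1) * y.1)

theorem locallyLipschitz_phasePlaneField {p : ℝ} (hp : 2 < p) :
    LocallyLipschitz (phasePlaneField p) := by
  have h : ContDiff ℝ 1 fun y : ℝ × ℝ => ‖y.1‖ ^ (p - 1) * y.1 :=
    (contDiff_fst.norm_rpow (by linarith)).mul contDiff_fst
  simp only [Real.norm_eq_abs] at h
  exact (contDiff_snd.prodMk (contDiff_fst.sub h)).locallyLipschitz

noncomputable def energy (p u v : ℝ) : ℝ := v ^ 2 / 2 - u ^ 2 / 2 + |u| ^ (p + 1) / (p + 1)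

@[simp]
theorem energy_neg (p u v : ℝ) : energy p (-u) (-v) = energy p u v := by
  simp [energy]

theorem rpow_sub_one_eq_of_energy_eq_zero {p a : ℝ} (hp : -1 < p) (ha : 0 < a)
    (hE : energy p a 0 = 0) : a ^ (p - 1) = (p + 1) / 2 := by
  have hsplit : a ^ (p + 1) = a ^ (p - 1) * a ^ 2 := by
    rw [← Real.rpow_natCast, ← Real.rpow_add ha]; norm_num; ring_nf
  rw [energy, abs_of_pos ha, hsplit] at hE
  have : p + 1 ≠ 0 := by linarith
  field_simp at hE
  nlinarith [pow_pos ha 2]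

def SolvesPhaseSystem (p : ℝ) (u v : ℝ → ℝ) : Prop :=
  ∀ t, HasDerivAt u (v t) t ∧ HasDerivAt v (u t - |u t| ^ (p - 1) * u t) t

theorem solvesPhaseSystem_of_contDiff {p : ℝ} {w : ℝ → ℝ} (hw : ContDiff ℝ 2 w)
    (heq : ∀ x, deriv (deriv w) x - w x + |w x| ^ (p - 1) * w x = 0) :
    SolvesPhaseSystem p w (deriv w) := fun t => by
  have hw' : ContDiff ℝ 1 (deriv w) := (contDiff_succ_iff_deriv.mp hw).2.2
  exact ⟨(hw.differentiable two_ne_zero t).hasDerivAt,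
    (hw'.differentiable one_ne_zero t).hasDerivAt.congr_deriv (by linarith [heq t])⟩

namespace SolvesPhaseSystem

variable {p : ℝ} {u v : ℝ → ℝ}

theorem hasDerivAt_prod (h : SolvesPhaseSystem p u v) (t : ℝ) :
    HasDerivAt (fun t => (u t, v t)) (phasePlaneField p (u t, v t)) t :=
  (h t).1.prodMk (h t).2

theorem neg (h : SolvesPhaseSystem p u v) :
    SolvesPhaseSystem p (fun t => -u t) (fun t => -v t) := fun t => by
  refine ⟨(h t).1.neg, (h t).2.neg.congr_deriv ?_⟩
  rw [abs_neg]; ring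

theorem comp_sub_const (h : SolvesPhaseSystem p u v) (a : ℝ) :
    SolvesPhaseSystem p (fun t => u (t - a)) (fun t => v (t - a)) := fun t =>
  ⟨(h (t - a)).1.comp_sub_const t a, (h (t - a)).2.comp_sub_const t a⟩

theorem hasDerivAt_energy (hp : 0 < p) (h : SolvesPhaseSystem p u v) (t : ℝ) :
    HasDerivAt (fun t => energy p (u t) (v t)) 0 t := by
  obtain ⟨hu, hv⟩ := h t
  have hpow : HasDerivAt (fun t => |u t| ^ (p + 1)) ((p + 1) * |u t| ^ (p - 1) * u t * v t) t := by
    have := (hasDerivAt_abs_rpow (u t) (by linarith : 1 < p + 1)).comp t hu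
    rwa [show p + 1 - 2 = p - 1 by ring] at this
  have hE : HasDerivAt (fun t => energy p (u t) (v t)) _ t :=
    (((hv.pow 2).div_const 2).sub ((hu.pow 2).div_const 2)).add (hpow.div_const (p + 1))
  convert hE using 1
  field_simp
  ring

theorem energy_eq_zero (hp : 0 < p) (h : SolvesPhaseSystem p u v)
    (htop : Tendsto u atTop (𝓝 0)) (t : ℝ) : energy p (u t) (v t) = 0 := by
  obtain ⟨ξ, hξ, hvξ⟩ := exists_seq_tendsto_atTop_deriv_tendsto_zero (fun t => (h t).1) htop
  have hconst (s : ℝ) : energy p (u s) (v s) = energy p (u t) (v t) :=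
    is_const_of_deriv_eq_zero (fun s => (h.hasDerivAt_energy hp s).differentiableAt)
      (fun s => (h.hasDerivAt_energy hp s).deriv) s t
  have huξ := htop.comp hξ
  have hlim : Tendsto (fun n => energy p (u (ξ n)) (v (ξ n))) atTop (𝓝 (energy p 0 0)) :=
    (((hvξ.pow 2).div_const 2).sub ((huξ.pow 2).div_const 2)).add
      ((huξ.abs.rpow_const (.inr (by linarith))).div_const (p + 1))
  simp only [hconst] at hlim
  simpa [energy, Real.zero_rpow (by linarith : p + 1 ≠ 0)] using
    tendsto_nhds_unique tendsto_const_nhds hlim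

theorem unique (hp : 2 < p) (h : SolvesPhaseSystem p u v) {u' v' : ℝ → ℝ}
    (h' : SolvesPhaseSystem p u' v') {t₀ : ℝ} (hu : u t₀ = u' t₀) (hv : v t₀ = v' t₀) :
    u = u' :=
  funext fun t => congrArg Prod.fst <| congrFun (ODE_solution_unique_univ_of_locallyLipschitz
    (locallyLipschitz_phasePlaneField hp) h.hasDerivAt_prod h'.hasDerivAt_prod
    (Prod.ext hu hv)) t

end SolvesPhaseSystem

theorem Q_pos {p : ℝ} (hp : -1 < p) (x : ℝ) : 0 < Q p x := by
  have : 0 < p + 1 := by linarith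
  unfold Q; positivity

theorem Q_rpow_sub_one {p : ℝ} (hp : 1 < p) (x : ℝ) :
    Q p x ^ (p - 1) = (p + 1) / (2 * cosh ((p - 1) / 2 * x) ^ 2) := by
  have : 0 < p + 1 := by linarith
  rw [Q, one_div, Real.rpow_inv_rpow (by positivity) (by linarith)]

noncomputable def derivQ (p x : ℝ) : ℝ :=
  -(sinh ((p - 1) / 2 * x) / cosh ((p - 1) / 2 * x)) * Q p x

theorem hasDerivAt_Q {p : ℝ} (hp : 1 < p) (x : ℝ) : HasDerivAt (Q p) (derivQ p x) x := by
  have hc := cosh_pos ((p - 1) / 2 * x)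
  have hb : HasDerivAt (fun x => (p - 1) / 2 * x) ((p - 1) / 2) x := by
    simpa using (hasDerivAt_id x).const_mul ((p - 1) / 2)
  have hX : HasDerivAt (fun x => (p + 1) / (2 * cosh ((p - 1) / 2 * x) ^ 2)) _ x :=
    (hasDerivAt_const x (p + 1)).div ((hb.cosh.pow 2).const_mul 2) (by positivity)
  have hXpos : 0 < (p + 1) / (2 * cosh ((p - 1) / 2 * x) ^ 2) := by
    have : 0 < p + 1 := by linarith
    positivity
  have hQ : HasDerivAt (Q p) _ x := hX.rpow_const (p := 1 / (p - 1)) (.inl hXpos.ne')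
  convert hQ using 1
  rw [derivQ, Q, Real.rpow_sub_one hXpos.ne']
  have : p - 1 ≠ 0 := by linarith
  field_simp
  ring

theorem hasDerivAt_derivQ {p : ℝ} (hp : 1 < p) (x : ℝ) :
    HasDerivAt (derivQ p) (Q p x - |Q p x| ^ (p - 1) * Q p x) x := by
  have hc := cosh_pos ((p - 1) / 2 * x)
  have hb : HasDerivAt (fun x => (p - 1) / 2 * x) ((p - 1) / 2) x := by
    simpa using (hasDerivAt_id x).const_mul ((p - 1) / 2)
  have hQ' : HasDerivAt (derivQ p) _ x :=
    ((hb.sinh.div hb.cosh hc.ne').neg).mul (hasDerivAt_Q hp x)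
  convert hQ' using 1
  rw [abs_of_pos (Q_pos (by linarith) x), Q_rpow_sub_one hp, derivQ, Pi.neg_apply, Pi.div_apply]
  generalize (p - 1) / 2 * x = y at hc ⊢
  field_simp
  linear_combination (p + 1) * Q p x * cosh_sq y

theorem solvesPhaseSystem_Q {p : ℝ} (hp : 1 < p) : SolvesPhaseSystem p (Q p) (derivQ p) :=
  fun x => ⟨hasDerivAt_Q hp x, hasDerivAt_derivQ hp x⟩

namespace SolvesPhaseSystem

variable {p : ℝ} {u v : ℝ → ℝ}

theorem eq_Q_of_isLocalMax (hp : 2 < p) (h : SolvesPhaseSystem p u v) {x₀ : ℝ}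
    (hE : energy p (u x₀) (v x₀) = 0) (hmax : IsLocalMax u x₀) (hpos : 0 < u x₀) :
    ∀ t, u t = Q p (t - x₀) := by
  have hv₀ : v x₀ = 0 := hmax.hasDerivAt_eq_zero (h x₀).1
  have hu₀ : u x₀ = Q p 0 := by
    rw [← Real.rpow_left_inj hpos.le (Q_pos (by linarith) 0).le (by linarith : p - 1 ≠ 0),
      Q_rpow_sub_one (by linarith),
      rpow_sub_one_eq_of_energy_eq_zero (by linarith) hpos (hv₀ ▸ hE)]
    simp
  exact congrFun <| h.unique hp ((solvesPhaseSystem_Q (by linarith)).comp_sub_const x₀)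
    (t₀ := x₀) (by simpa using hu₀) (by simp [hv₀, derivQ])

theorem eq_Q_or_eq_neg_Q (hp : 2 < p) (h : SolvesPhaseSystem p u v) {x₀ : ℝ}
    (hE : energy p (u x₀) (v x₀) = 0) (hmax : ∀ x, |u x| ≤ |u x₀|) (hne : u x₀ ≠ 0) :
    (∀ t, u t = Q p (t - x₀)) ∨ ∀ t, u t = -Q p (t - x₀) := by
  rcases hne.lt_or_gt with hneg | hpos
  · refine .inr fun t => neg_eq_iff_eq_neg.mp ?_
    refine h.neg.eq_Q_of_isLocalMax hp (by simpa using hE) (.of_forall fun x => ?_) (by simpa) t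
    simpa [abs_of_neg hneg] using (neg_le_abs (u x)).trans (hmax x)
  · refine .inl (h.eq_Q_of_isLocalMax hp hE (.of_forall fun x => ?_) hpos)
    simpa [abs_of_pos hpos] using (le_abs_self (u x)).trans (hmax x)

end SolvesPhaseSystem

theorem bound_state_uniqueness (p : ℝ) (hp : 2 < p) (w : ℝ → ℝ)
    (hw : ContDiff ℝ 2 w) (hne : ∃ x, w x ≠ 0)
    (heq : ∀ x : ℝ, deriv (deriv w) x - w x + |w x| ^ (p - 1) * w x = 0)
    (htop : Filter.Tendsto w Filter.atTop (nhds 0))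
    (hbot : Filter.Tendsto w Filter.atBot (nhds 0)) :
    ∃ a : ℝ, (∀ x : ℝ, w x = Q p (x - a)) ∨ (∀ x : ℝ, w x = -Q p (x - a)) := by
  obtain ⟨x₀, hx₀, hmax⟩ := hw.continuous.exists_ne_zero_forall_abs_le hne htop hbot
  have hsol := solvesPhaseSystem_of_contDiff hw heq
  exact ⟨x₀, hsol.eq_Q_or_eq_neg_Q hp (hsol.energy_eq_zero (by linarith) htop x₀) hmax hx₀⟩
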